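/- arXiv:1803.09524 — 5 statements merged into one kernel-verified Lean document; each statement's English description precedes it below -/
import Mathlib

section
/- Let P be a finite set of points in ℝ³, and let ℓ and ℓ' be two skew lines (lines not contained in a common plane). Then P spans at least |P ∩ ℓ| · |P ∩ ℓ'| − |P| ordinary lines. -/
/-- A line in `ℝ³`: an affine subspace whose direction has dimension 1. -/
def IsLine3 (L : AffineSubspace ℝ (Fin 3 → ℝ)) : Prop :=
  Module.finrank ℝ L.direction = 1

/-- A plane in `ℝ³`: an affine subspace whose direction has dimension 2. -/
def IsPlane3 (π : AffineSubspace ℝ (Fin 3 → ℝ)) : Prop :=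
  Module.finrank ℝ π.direction = 2

/-- The ordinary lines of a point set: lines containing exactly two points of the set. -/
def ordinaryLines3 (P : Set (Fin 3 → ℝ)) : Set (AffineSubspace ℝ (Fin 3 → ℝ)) :=
  {L | IsLine3 L ∧ (P ∩ ↑L).ncard = 2}

open Module Set

abbrev V3 := Fin 3 → ℝ

lemma line_nonempty {L : AffineSubspace ℝ V3} (hL : IsLine3 L) :
    (L : Set V3).Nonempty := by
  rw [AffineSubspace.nonempty_iff_ne_bot]
  rintro rfl
  unfold IsLine3 at hL
  rw [AffineSubspace.direction_bot] at hL
  simp [finrank_bot] at hL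

lemma le_of_dir_le {S T : AffineSubspace ℝ V3} {p : V3} (hpS : p ∈ S) (hpT : p ∈ T)
    (h : S.direction ≤ T.direction) : S ≤ T := by
  intro x hx
  have : x -ᵥ p ∈ T.direction := h (AffineSubspace.vsub_mem_direction hx hpS)
  have := AffineSubspace.vadd_mem_of_mem_direction this hpT
  simpa using this

lemma eq_of_le_dim {S T : AffineSubspace ℝ V3} (hle : S ≤ T)
    (hne : (S : Set V3).Nonempty)
    (h : Module.finrank ℝ T.direction ≤ Module.finrank ℝ S.direction) : S = T := by
  have hd : S.direction = T.direction := by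
    apply Submodule.eq_of_le_of_finrank_le (AffineSubspace.direction_le hle) h
  obtain ⟨p, hp⟩ := hne
  exact AffineSubspace.ext_of_direction_eq hd ⟨p, hp, hle hp⟩

lemma span_pair_isLine {a b : V3} (hab : a ≠ b) : IsLine3 (affineSpan ℝ {a, b}) := by
  unfold IsLine3
  rw [direction_affineSpan, vectorSpan_pair]
  exact finrank_span_singleton (by simpa [sub_eq_zero] using hab)

lemma line_eq_span {L : AffineSubspace ℝ V3} (hL : IsLine3 L) {a b : V3}
    (ha : a ∈ L) (hb : b ∈ L) (hab : a ≠ b) : L = affineSpan ℝ {a, b} := by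
  have h1 : affineSpan ℝ ({a, b} : Set V3) ≤ L := by
    rw [affineSpan_le]; rintro x (rfl | rfl) <;> simpa
  exact (eq_of_le_dim h1 ⟨a, by simp [mem_affineSpan]⟩
    (by rw [hL, (span_pair_isLine hab : _ = 1)])).symm

lemma exists_spanning {W : Submodule ℝ V3} (h : Module.finrank ℝ W = 1) :
    ∃ v : V3, v ≠ 0 ∧ W = ℝ ∙ v := by
  have : Nontrivial W := by
    apply Module.nontrivial_of_finrank_pos (R := ℝ); omega
  obtain ⟨⟨v, hvW⟩, hv0⟩ := exists_ne (0 : W)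
  have hv : v ≠ 0 := by simpa [Subtype.ext_iff] using hv0
  refine ⟨v, hv, ?_⟩
  have hle : (ℝ ∙ v) ≤ W := by simpa [Submodule.span_le] using hvW
  exact (Submodule.eq_of_le_of_finrank_le hle (by rw [h, finrank_span_singleton hv])).symm

lemma plane_of_indep (p : V3) {v w : V3} (h : LinearIndependent ℝ ![v, w]) :
    IsPlane3 (AffineSubspace.mk' p (Submodule.span ℝ {v, w})) := by
  unfold IsPlane3
  rw [AffineSubspace.direction_mk']
  have : ({v, w} : Set V3) = Set.range ![v, w] := by
    simp [Matrix.range_cons, Matrix.range_empty, Set.pair_comm]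
  rw [this, finrank_span_eq_card h]
  simp

lemma exists_plane_line_point {L : AffineSubspace ℝ V3} (hL : IsLine3 L) {p : V3}
    (hp : p ∉ L) : ∃ π : AffineSubspace ℝ V3, IsPlane3 π ∧ L ≤ π ∧ p ∈ π := by
  obtain ⟨q, hq⟩ := line_nonempty hL
  obtain ⟨v, hv0, hv⟩ := exists_spanning hL
  have hindep : LinearIndependent ℝ ![v, p - q] := by
    rw [LinearIndependent.pair_iff' hv0]
    intro a ha
    apply hp
    have : p - q ∈ L.direction := by
      rw [hv]; exact ha ▸ Submodule.smul_mem _ a (Submodule.mem_span_singleton_self v)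
    have := AffineSubspace.vadd_mem_of_mem_direction this hq
    simpa using this
  refine ⟨AffineSubspace.mk' q (Submodule.span ℝ {v, p - q}), plane_of_indep q hindep, ?_, ?_⟩
  · apply le_of_dir_le hq (AffineSubspace.self_mem_mk' _ _)
    rw [AffineSubspace.direction_mk', hv]
    exact Submodule.span_mono (by simp)
  · have hmem : p - q ∈ Submodule.span ℝ ({v, p - q} : Set V3) :=
      Submodule.subset_span (by simp)
    have := AffineSubspace.vadd_mem_mk' q hmem
    simpa using this

lemma skew_disjoint {ℓ ℓ' : AffineSubspace ℝ V3} (hℓ : IsLine3 ℓ) (hℓ' : IsLine3 ℓ')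
    (hskew : ¬ ∃ π : AffineSubspace ℝ V3, IsPlane3 π ∧ ℓ ≤ π ∧ ℓ' ≤ π) :
    ∀ p, p ∈ ℓ → p ∈ ℓ' → False := by
  intro p hp hp'
  obtain ⟨v, hv0, hv⟩ := exists_spanning hℓ
  obtain ⟨v', hv'0, hv'⟩ := exists_spanning hℓ'
  by_cases hmem : v' ∈ (ℝ ∙ v)
  · -- parallel (same direction); extend to a plane
    have hdir : (ℝ ∙ v') = (ℝ ∙ v) := by
      apply Submodule.eq_of_le_of_finrank_le (by simpa [Submodule.span_le] using hmem)
      rw [finrank_span_singleton hv0, finrank_span_singleton hv'0]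
    have hne : (ℝ ∙ v) ≠ ⊤ := by
      intro h
      have : Module.finrank ℝ (ℝ ∙ v) = 3 := by
        rw [h]; simp [finrank_top]
      rw [finrank_span_singleton hv0] at this; omega
    obtain ⟨w, hw⟩ : ∃ w : V3, w ∉ (ℝ ∙ v) := by
      by_contra hcon
      push_neg at hcon
      exact hne (Submodule.eq_top_iff'.2 hcon)
    have hindep : LinearIndependent ℝ ![v, w] := by
      rw [LinearIndependent.pair_iff' hv0]
      intro a ha
      exact hw (ha ▸ Submodule.smul_mem _ _ (Submodule.mem_span_singleton_self v))
    refine hskew ⟨AffineSubspace.mk' p (Submodule.span ℝ {v, w}), plane_of_indep p hindep, ?_, ?_⟩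
    · apply le_of_dir_le hp (AffineSubspace.self_mem_mk' _ _)
      rw [AffineSubspace.direction_mk', hv]
      exact Submodule.span_mono (by simp)
    · apply le_of_dir_le hp' (AffineSubspace.self_mem_mk' _ _)
      rw [AffineSubspace.direction_mk', hv', hdir]
      exact Submodule.span_mono (by simp)
  · have hindep : LinearIndependent ℝ ![v, v'] := by
      rw [LinearIndependent.pair_iff' hv0]
      intro a ha
      exact hmem (ha ▸ Submodule.smul_mem _ _ (Submodule.mem_span_singleton_self v))
    refine hskew ⟨AffineSubspace.mk' p (Submodule.span ℝ {v, v'}), plane_of_indep p hindep, ?_, ?_⟩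
    · apply le_of_dir_le hp (AffineSubspace.self_mem_mk' _ _)
      rw [AffineSubspace.direction_mk', hv]
      exact Submodule.span_mono (by simp)
    · apply le_of_dir_le hp' (AffineSubspace.self_mem_mk' _ _)
      rw [AffineSubspace.direction_mk', hv']
      exact Submodule.span_mono (by simp)

lemma line_eq_of_two_mem {L M : AffineSubspace ℝ V3} (hL : IsLine3 L) (hM : IsLine3 M)
    {a b : V3} (hab : a ≠ b) (haL : a ∈ L) (hbL : b ∈ L) (haM : a ∈ M) (hbM : b ∈ M) :
    L = M :=
  (line_eq_span hL haL hbL hab).trans (line_eq_span hM haM hbM hab).symm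

lemma mem_span_pair_left (a b : V3) : a ∈ affineSpan ℝ ({a, b} : Set V3) :=
  subset_affineSpan ℝ _ (by simp)

lemma mem_span_pair_right (a b : V3) : b ∈ affineSpan ℝ ({a, b} : Set V3) :=
  subset_affineSpan ℝ _ (by simp)

section Main

variable {ℓ ℓ' : AffineSubspace ℝ V3} (hℓ : IsLine3 ℓ) (hℓ' : IsLine3 ℓ')
  (hdisj : ∀ p, p ∈ ℓ → p ∈ ℓ' → False)

include hℓ hℓ' hdisj

/-- Injectivity of the joining map. -/
lemma span_pair_inj {a a' b b' : V3} (haℓ : a ∈ ℓ) (ha'ℓ : a' ∈ ℓ)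
    (hbℓ' : b ∈ ℓ') (hb'ℓ' : b' ∈ ℓ')
    (heq : affineSpan ℝ ({a, b} : Set V3) = affineSpan ℝ ({a', b'} : Set V3)) :
    a = a' ∧ b = b' := by
  have hab : a ≠ b := fun h => hdisj a haℓ (h ▸ hbℓ')
  have hLab : IsLine3 (affineSpan ℝ ({a, b} : Set V3)) := span_pair_isLine hab
  have ha' : a' ∈ affineSpan ℝ ({a, b} : Set V3) := heq ▸ mem_span_pair_left a' b'
  have hb' : b' ∈ affineSpan ℝ ({a, b} : Set V3) := heq ▸ mem_span_pair_right a' b'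
  constructor
  · by_contra haa'
    have h1 : ℓ = affineSpan ℝ ({a, b} : Set V3) :=
      line_eq_of_two_mem hℓ hLab haa' haℓ ha'ℓ (mem_span_pair_left a b) ha'
    exact hdisj b (h1 ▸ mem_span_pair_right a b) hbℓ'
  · by_contra hbb'
    have h1 : ℓ' = affineSpan ℝ ({a, b} : Set V3) :=
      line_eq_of_two_mem hℓ' hLab hbb' hbℓ' hb'ℓ' (mem_span_pair_right a b) hb'
    exact hdisj a haℓ (h1 ▸ mem_span_pair_left a b)

/-- A point of the span of a joining pair which is not `a` or `b` avoids both lines. -/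
lemma third_point_avoids {a b c : V3} (haℓ : a ∈ ℓ) (hbℓ' : b ∈ ℓ')
    (hc : c ∈ affineSpan ℝ ({a, b} : Set V3)) (hca : c ≠ a) (hcb : c ≠ b) :
    c ∉ ℓ ∧ c ∉ ℓ' := by
  have hab : a ≠ b := fun h => hdisj a haℓ (h ▸ hbℓ')
  have hLab : IsLine3 (affineSpan ℝ ({a, b} : Set V3)) := span_pair_isLine hab
  constructor
  · intro hcℓ
    have h1 : ℓ = affineSpan ℝ ({a, b} : Set V3) :=
      line_eq_of_two_mem hℓ hLab (Ne.symm hca) haℓ hcℓ (mem_span_pair_left a b) hc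
    exact hdisj b (h1 ▸ mem_span_pair_right a b) hbℓ'
  · intro hcℓ'
    have h1 : ℓ' = affineSpan ℝ ({a, b} : Set V3) :=
      line_eq_of_two_mem hℓ' hLab (Ne.symm hcb) hbℓ' hcℓ' (mem_span_pair_right a b) hc
    exact hdisj a haℓ (h1 ▸ mem_span_pair_left a b)

end Main

/-- Key: a point off both lines lies on at most one joining line. -/
lemma key_inj {ℓ ℓ' : AffineSubspace ℝ V3} (hℓ : IsLine3 ℓ) (hℓ' : IsLine3 ℓ')
    (hdisj : ∀ p, p ∈ ℓ → p ∈ ℓ' → False)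
    (hskew : ¬ ∃ π : AffineSubspace ℝ V3, IsPlane3 π ∧ ℓ ≤ π ∧ ℓ' ≤ π)
    {a a' b b' p : V3} (haℓ : a ∈ ℓ) (ha'ℓ : a' ∈ ℓ) (hbℓ' : b ∈ ℓ') (hb'ℓ' : b' ∈ ℓ')
    (hp : p ∈ affineSpan ℝ ({a, b} : Set V3)) (hp' : p ∈ affineSpan ℝ ({a', b'} : Set V3))
    (hpℓ : p ∉ ℓ) (hpℓ' : p ∉ ℓ') : a = a' ∧ b = b' := by
  have hab : a ≠ b := fun h => hdisj a haℓ (h ▸ hbℓ')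
  have ha'b' : a' ≠ b' := fun h => hdisj a' ha'ℓ (h ▸ hb'ℓ')
  have hpa : p ≠ a := fun h => hpℓ (h ▸ haℓ)
  have hpa' : p ≠ a' := fun h => hpℓ (h ▸ ha'ℓ)
  have hpb : p ≠ b := fun h => hpℓ' (h ▸ hbℓ')
  have hpb' : p ≠ b' := fun h => hpℓ' (h ▸ hb'ℓ')
  have hLab : IsLine3 (affineSpan ℝ ({a, b} : Set V3)) := span_pair_isLine hab
  have hLa'b' : IsLine3 (affineSpan ℝ ({a', b'} : Set V3)) := span_pair_isLine ha'b'
  -- first, b = b'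
  have hbb' : b = b' := by
    by_contra hbb'
    obtain ⟨π, hπ, hℓπ, hpπ⟩ := exists_plane_line_point hℓ hpℓ
    have h1 : affineSpan ℝ ({a, b} : Set V3) = affineSpan ℝ ({a, p} : Set V3) :=
      line_eq_of_two_mem hLab (span_pair_isLine (Ne.symm hpa)) (Ne.symm hpa)
        (mem_span_pair_left a b) hp (mem_span_pair_left a p) (mem_span_pair_right a p)
    have hbπ : b ∈ π := by
      have : b ∈ affineSpan ℝ ({a, p} : Set V3) := h1 ▸ mem_span_pair_right a b
      exact affineSpan_le.2 (by rintro x (rfl | rfl); exacts [hℓπ haℓ, hpπ]) this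
    have h2 : affineSpan ℝ ({a', b'} : Set V3) = affineSpan ℝ ({a', p} : Set V3) :=
      line_eq_of_two_mem hLa'b' (span_pair_isLine (Ne.symm hpa')) (Ne.symm hpa')
        (mem_span_pair_left a' b') hp' (mem_span_pair_left a' p) (mem_span_pair_right a' p)
    have hb'π : b' ∈ π := by
      have : b' ∈ affineSpan ℝ ({a', p} : Set V3) := h2 ▸ mem_span_pair_right a' b'
      exact affineSpan_le.2 (by rintro x (rfl | rfl); exacts [hℓπ ha'ℓ, hpπ]) this
    refine hskew ⟨π, hπ, hℓπ, ?_⟩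
    rw [line_eq_span hℓ' hbℓ' hb'ℓ' hbb']
    exact affineSpan_le.2 (by rintro x (rfl | rfl); exacts [hbπ, hb'π])
  subst hbb'
  refine ⟨?_, rfl⟩
  by_contra haa'
  have hM : IsLine3 (affineSpan ℝ ({b, p} : Set V3)) := span_pair_isLine (Ne.symm hpb)
  have h1 : affineSpan ℝ ({a, b} : Set V3) = affineSpan ℝ ({b, p} : Set V3) :=
    line_eq_of_two_mem hLab hM (Ne.symm hpb) (mem_span_pair_right a b) hp
      (mem_span_pair_left b p) (mem_span_pair_right b p)
  have h2 : affineSpan ℝ ({a', b} : Set V3) = affineSpan ℝ ({b, p} : Set V3) :=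
    line_eq_of_two_mem hLa'b' hM (Ne.symm hpb) (mem_span_pair_right a' b) hp'
      (mem_span_pair_left b p) (mem_span_pair_right b p)
  have haM : a ∈ affineSpan ℝ ({b, p} : Set V3) := h1 ▸ mem_span_pair_left a b
  have ha'M : a' ∈ affineSpan ℝ ({b, p} : Set V3) := h2 ▸ mem_span_pair_left a' b
  have hℓM : ℓ = affineSpan ℝ ({b, p} : Set V3) :=
    line_eq_of_two_mem hℓ hM haa' haℓ ha'ℓ haM ha'M
  exact hpℓ (hℓM ▸ mem_span_pair_right b p)

lemma ordinary_finite (P : Finset V3) : (ordinaryLines3 ↑P).Finite := by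
  have hinj : Set.InjOn (fun L : AffineSubspace ℝ V3 => (↑P : Set V3) ∩ ↑L)
      (ordinaryLines3 ↑P) := by
    rintro L ⟨hL, hL2⟩ M ⟨hM, hM2⟩ h
    simp only at h
    obtain ⟨x, y, hxy, hset⟩ := Set.ncard_eq_two.1 hL2
    have hxL : x ∈ L := (hset ▸ (by simp : x ∈ ({x,y} : Set V3)) : x ∈ (↑P : Set V3) ∩ ↑L).2
    have hyL : y ∈ L := (hset ▸ (by simp : y ∈ ({x,y} : Set V3)) : y ∈ (↑P : Set V3) ∩ ↑L).2
    have hxM : x ∈ M := ((h ▸ hset) ▸ (by simp : x ∈ ({x,y} : Set V3)) : x ∈ (↑P : Set V3) ∩ ↑M).2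
    have hyM : y ∈ M := ((h ▸ hset) ▸ (by simp : y ∈ ({x,y} : Set V3)) : y ∈ (↑P : Set V3) ∩ ↑M).2
    exact line_eq_of_two_mem hL hM hxy hxL hyL hxM hyM
  have himg : ((fun L : AffineSubspace ℝ V3 => (↑P : Set V3) ∩ ↑L) '' (ordinaryLines3 ↑P)).Finite := by
    apply Set.Finite.subset (P.finite_toSet.finite_subsets)
    rintro S ⟨L, _, rfl⟩
    exact Set.inter_subset_left
  exact Set.Finite.of_finite_image himg hinj

theorem statement5 (P : Finset (Fin 3 → ℝ)) (ℓ ℓ' : AffineSubspace ℝ (Fin 3 → ℝ))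
    (hℓ : IsLine3 ℓ) (hℓ' : IsLine3 ℓ')
    (hskew : ¬ ∃ π : AffineSubspace ℝ (Fin 3 → ℝ), IsPlane3 π ∧ ℓ ≤ π ∧ ℓ' ≤ π) :
    (((↑P : Set (Fin 3 → ℝ)) ∩ ↑ℓ).ncard : ℝ) * (((↑P : Set (Fin 3 → ℝ)) ∩ ↑ℓ').ncard : ℝ)
        - (P.card : ℝ)
      ≤ ((ordinaryLines3 ↑P).ncard : ℝ) := by
  classical
  have hdisj : ∀ p, p ∈ ℓ → p ∈ ℓ' → False := skew_disjoint hℓ hℓ' hskew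
  set A : Finset V3 := P.filter (· ∈ ℓ) with hA
  set B : Finset V3 := P.filter (· ∈ ℓ') with hB
  have hAset : (↑P : Set V3) ∩ ↑ℓ = ↑A := by ext x; simp [hA, and_comm]
  have hBset : (↑P : Set V3) ∩ ↑ℓ' = ↑B := by ext x; simp [hB, and_comm]
  rw [hAset, hBset, Set.ncard_coe_finset, Set.ncard_coe_finset]
  set f : V3 × V3 → AffineSubspace ℝ V3 := fun q => affineSpan ℝ {q.1, q.2} with hf
  set good := (A ×ˢ B).filter (fun q => f q ∈ ordinaryLines3 ↑P) with hgood
  set bad := (A ×ˢ B).filter (fun q => f q ∉ ordinaryLines3 ↑P) with hbad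
  have hsplit : good.card + bad.card = A.card * B.card := by
    rw [hgood, hbad, Finset.card_filter_add_card_filter_not, Finset.card_product]
  have hmemA : ∀ q ∈ A ×ˢ B, q.1 ∈ P ∧ q.1 ∈ ℓ ∧ q.2 ∈ P ∧ q.2 ∈ ℓ' := by
    intro q hq
    rw [Finset.mem_product] at hq
    obtain ⟨h1, h2⟩ := hq
    rw [hA, Finset.mem_filter] at h1
    rw [hB, Finset.mem_filter] at h2
    exact ⟨h1.1, h1.2, h2.1, h2.2⟩
  have hfin : (ordinaryLines3 ↑P).Finite := ordinary_finite P
  -- good lines give ordinary lines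
  have hgoodle : good.card ≤ (ordinaryLines3 (↑P : Set V3)).ncard := by
    have hinjf : Set.InjOn f ↑good := by
      intro q hq q' hq' heq
      have hq1 := hmemA q (Finset.filter_subset _ _ (by exact_mod_cast hq))
      have hq2 := hmemA q' (Finset.filter_subset _ _ (by exact_mod_cast hq'))
      obtain ⟨h1, h2⟩ := span_pair_inj hℓ hℓ' hdisj hq1.2.1 hq2.2.1 hq1.2.2.2 hq2.2.2.2 heq
      exact Prod.ext h1 h2
    have h1 : good.card = (good.image f).card := (Finset.card_image_of_injOn hinjf).symm
    rw [h1, ← Set.ncard_coe_finset]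
    apply Set.ncard_le_ncard _ hfin
    intro L hL
    rw [Finset.coe_image] at hL
    obtain ⟨q, hq, rfl⟩ := hL
    have := Finset.mem_filter.1 (by exact_mod_cast hq : q ∈ good)
    exact this.2
  -- bad pairs inject into P
  have hthird : ∀ q ∈ bad, ∃ c, c ∈ P ∧ c ∈ f q ∧ c ∉ ℓ ∧ c ∉ ℓ' := by
    intro q hq
    rw [hbad, Finset.mem_filter] at hq
    obtain ⟨hqAB, hnot⟩ := hq
    obtain ⟨h1P, h1ℓ, h2P, h2ℓ'⟩ := hmemA q hqAB
    have hab : q.1 ≠ q.2 := fun h => hdisj q.1 h1ℓ (h ▸ h2ℓ')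
    have hline : IsLine3 (f q) := span_pair_isLine hab
    have hne2 : ((↑P : Set V3) ∩ ↑(f q)).ncard ≠ 2 := fun h => hnot ⟨hline, h⟩
    have hsub : ({q.1, q.2} : Set V3) ⊆ (↑P : Set V3) ∩ ↑(f q) := by
      rintro x (rfl | rfl)
      exacts [⟨h1P, mem_span_pair_left _ _⟩, ⟨h2P, mem_span_pair_right _ _⟩]
    have hnsub : ¬ ((↑P : Set V3) ∩ ↑(f q) ⊆ {q.1, q.2}) := by
      intro hsub2
      exact hne2 (by rw [Set.Subset.antisymm hsub2 hsub]; exact Set.ncard_pair hab)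
    obtain ⟨c, hcS, hcnot⟩ := Set.not_subset.1 hnsub
    have hca : c ≠ q.1 := fun h => hcnot (by simp [h])
    have hcb : c ≠ q.2 := fun h => hcnot (by simp [h])
    obtain ⟨hc1, hc2⟩ := third_point_avoids hℓ hℓ' hdisj h1ℓ h2ℓ' hcS.2 hca hcb
    exact ⟨c, hcS.1, hcS.2, hc1, hc2⟩
  have hbadle : bad.card ≤ P.card := by
    set g : V3 × V3 → V3 := fun q =>
      if h : ∃ c, c ∈ P ∧ c ∈ f q ∧ c ∉ ℓ ∧ c ∉ ℓ' then h.choose else 0 with hgdef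
    have hg : ∀ q ∈ bad, g q ∈ P ∧ g q ∈ f q ∧ g q ∉ ℓ ∧ g q ∉ ℓ' := by
      intro q hq
      have h := hthird q hq
      rw [hgdef]
      simp only [dif_pos h]
      exact h.choose_spec
    apply Finset.card_le_card_of_injOn g (fun q hq => (hg q hq).1)
    intro q hq q' hq' heq
    have hq0 : q ∈ bad := by exact_mod_cast hq
    have hq0' : q' ∈ bad := by exact_mod_cast hq'
    have hm := hmemA q (Finset.filter_subset _ _ hq0)
    have hm' := hmemA q' (Finset.filter_subset _ _ hq0')
    obtain ⟨_, hgq, hgℓ, hgℓ'⟩ := hg q hq0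
    obtain ⟨_, hgq', _, _⟩ := hg q' hq0'
    rw [heq] at hgq hgℓ hgℓ'
    obtain ⟨h1, h2⟩ := key_inj hℓ hℓ' hdisj hskew hm.2.1 hm'.2.1 hm.2.2.2 hm'.2.2.2
      (heq ▸ hgq : g q' ∈ affineSpan ℝ ({q.1, q.2} : Set V3)) hgq' hgℓ hgℓ'
    exact Prod.ext h1 h2
  have hfinal : A.card * B.card ≤ (ordinaryLines3 (↑P : Set V3)).ncard + P.card := by
    calc A.card * B.card = good.card + bad.card := hsplit.symm
      _ ≤ (ordinaryLines3 (↑P : Set V3)).ncard + P.card := Nat.add_le_add hgoodle hbadle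
  have := (Nat.cast_le (α := ℝ)).2 hfinal
  push_cast at this ⊢
  linarith
end

section
/- If a finite set of points in ℝ² is not contained in a single line, then it spans an ordinary line (the Sylvester–Gallai theorem). -/
noncomputable section

abbrev SGPlane := Fin 2 → ℝ

def sgCross (u v : SGPlane) : ℝ := u 0 * v 1 - u 1 * v 0
def sgDot (u v : SGPlane) : ℝ := u 0 * v 0 + u 1 * v 1
def sgSq (v : SGPlane) : ℝ := v 0 ^ 2 + v 1 ^ 2

lemma sgSq_nonneg (v : SGPlane) : 0 ≤ sgSq v := by unfold sgSq; positivity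

lemma sgSq_pos {v : SGPlane} (h : v ≠ 0) : 0 < sgSq v := by
  have h' : v 0 ≠ 0 ∨ v 1 ≠ 0 := by
    by_contra hc
    push_neg at hc
    exact h (funext fun i => by fin_cases i <;> simp [hc.1, hc.2])
  rcases h' with h' | h'
  · have h0 : 0 < v 0 ^ 2 := (sq_nonneg _).lt_of_ne (Ne.symm (pow_ne_zero 2 h'))
    have h1 : 0 ≤ v 1 ^ 2 := sq_nonneg _
    unfold sgSq; linarith
  · have h0 : 0 < v 1 ^ 2 := (sq_nonneg _).lt_of_ne (Ne.symm (pow_ne_zero 2 h'))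
    have h1 : 0 ≤ v 0 ^ 2 := sq_nonneg _
    unfold sgSq; linarith

lemma sgLagrange (u v : SGPlane) : sgCross u v ^ 2 + sgDot u v ^ 2 = sgSq u * sgSq v := by
  unfold sgCross sgDot sgSq; ring

/-- If `cross u v = 0` with `u ≠ 0` then `v` is a multiple of `u`. -/
lemma sgCross_eq_zero {u v : SGPlane} (hu : u ≠ 0) (h : sgCross u v = 0) :
    ∃ r : ℝ, v = r • u := by
  have hs : (0:ℝ) < sgSq u := sgSq_pos hu
  have hs' : u 0 ^ 2 + u 1 ^ 2 ≠ 0 := by unfold sgSq at hs; linarith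
  unfold sgCross at h
  refine ⟨sgDot u v / sgSq u, funext fun i => ?_⟩
  fin_cases i
  · show v 0 = (sgDot u v / sgSq u) * u 0
    unfold sgDot sgSq
    field_simp
    linear_combination (- u 1) * h
  · show v 1 = (sgDot u v / sgSq u) * u 1
    unfold sgDot sgSq
    field_simp
    linear_combination (u 0) * h

lemma sgCollinear {s : Set SGPlane}
    (h : ∀ p ∈ s, ∀ a ∈ s, ∀ b ∈ s, sgCross (a - p) (b - p) = 0) : Collinear ℝ s := by
  rcases s.eq_empty_or_nonempty with rfl | ⟨p₀, hp₀⟩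
  · exact collinear_empty _ _
  by_cases hsub : ∀ p ∈ s, p = p₀
  · exact Collinear.subset (fun x hx => hsub x hx) (collinear_singleton ℝ p₀)
  push_neg at hsub
  obtain ⟨a, ha, hane⟩ := hsub
  rw [collinear_iff_of_mem hp₀]
  refine ⟨a - p₀, fun p hp => ?_⟩
  have hu : a - p₀ ≠ 0 := sub_ne_zero.mpr hane
  obtain ⟨r, hr⟩ := sgCross_eq_zero hu (h p₀ hp₀ a ha p hp)
  exact ⟨r, by rw [← hr]; simp⟩

lemma sgPick2 {x y : ℝ} (h : 0 ≤ x * y) :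
    x * (x - 2 * y) ≤ 0 ∨ y * (y - 2 * x) ≤ 0 := by
  by_contra hc
  push_neg at hc
  nlinarith [hc.1, hc.2, sq_nonneg (x - y), sq_nonneg (x + y)]

lemma sgPick (t : Fin 3 → ℝ) : ∃ i j : Fin 3, i ≠ j ∧ t i * (t i - 2 * t j) ≤ 0 := by
  rcases le_or_gt 0 (t 0 * t 1) with h01 | h01
  · rcases sgPick2 h01 with h | h
    · exact ⟨0, 1, by decide, h⟩
    · exact ⟨1, 0, by decide, h⟩
  rcases le_or_gt 0 (t 0 * t 2) with h02 | h02
  · rcases sgPick2 h02 with h | h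
    · exact ⟨0, 2, by decide, h⟩
    · exact ⟨2, 0, by decide, h⟩
  have h12 : 0 ≤ t 1 * t 2 := by
    nlinarith [mul_pos_of_neg_of_neg h01 h02, sq_nonneg (t 0)]
  rcases sgPick2 h12 with h | h
  · exact ⟨1, 2, by decide, h⟩
  · exact ⟨2, 1, by decide, h⟩

/-- Kelly's step: if `c` is a third point on the line through `a, b`, then there is a
triple with strictly smaller "distance measure". -/
lemma sgCrux {p a b c : SGPlane} (hab : sgCross (a - p) (b - p) ≠ 0)
    {t : ℝ} (hc : c = t • (b - a) + a) (hca : c ≠ a) (hcb : c ≠ b) :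
    ∃ q r : SGPlane, (q = a ∨ q = b ∨ q = c) ∧ (r = a ∨ r = b ∨ r = c) ∧
      sgCross (p - q) (r - q) ≠ 0 ∧
      sgCross (p - q) (r - q) ^ 2 / sgSq (r - p) <
        sgCross (a - p) (b - p) ^ 2 / sgSq (b - a) := by
  set d := b - a with hd
  have hb : b = a + d := by rw [hd]; abel
  have hdne : d ≠ 0 := by
    intro h0
    apply hab
    have hba : b = a := by rwa [hd, sub_eq_zero] at h0
    simp only [hba, sgCross, Pi.sub_apply]
    ring
  have hs : (0:ℝ) < sgSq d := sgSq_pos hdne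
  have hs' : d 0 ^ 2 + d 1 ^ 2 ≠ 0 := by unfold sgSq at hs; linarith
  set u := p - a with hu
  set α := sgDot u d / sgSq d with hα
  set w := u - α • d with hw
  have hwd : w 0 * d 0 + w 1 * d 1 = 0 := by
    rw [hw, hα]
    unfold sgDot sgSq
    simp only [Pi.sub_apply, Pi.smul_apply, smul_eq_mul]
    field_simp
    ring
  have hwd' : sgDot w d = 0 := hwd
  have hcwd : sgCross w d = - sgCross (a - p) (b - p) := by
    rw [hw, hu, hd]
    simp only [sgCross, Pi.sub_apply, Pi.smul_apply, smul_eq_mul]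
    ring
  have hcwd_ne : sgCross w d ≠ 0 := by rw [hcwd]; simpa using hab
  have hcpos : 0 < sgCross w d ^ 2 := (sq_nonneg _).lt_of_ne (Ne.symm (pow_ne_zero 2 hcwd_ne))
  have hnum2 : sgCross w d ^ 2 = sgSq w * sgSq d := by
    have hl := sgLagrange w d
    rw [hwd'] at hl
    linarith [hl]
  have hh2 : (0:ℝ) < sgSq w := by nlinarith [sgSq_nonneg w, hs, hnum2, hcpos]
  -- the foot of the perpendicular
  set q0 : SGPlane := p - w with hq0
  have hpq : p = q0 + w := by rw [hq0]; abel
  have hq0' : q0 = a + α • d := by rw [hq0, hw, hu]; abel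
  -- parametrize the three points
  set τ : Fin 3 → ℝ := ![-α, 1 - α, t - α] with hτ
  set pts : Fin 3 → SGPlane := ![a, b, c] with hpts
  have hparam : ∀ i, pts i = q0 + τ i • d := by
    intro i
    fin_cases i
    · show a = q0 + (-α) • d
      rw [hq0']; module
    · show b = q0 + (1 - α) • d
      rw [hq0', hb]; module
    · show c = q0 + (t - α) • d
      rw [hq0', hc]; module
  -- distinctness of parameters
  have ht0 : t ≠ 0 := fun h0 => hca (by simp [hc, h0])
  have ht1 : t ≠ 1 := fun h1 => hcb (by rw [hc, h1, hb]; module)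
  have h01 : τ 0 ≠ τ 1 := by
    show ¬ (-α) = 1 - α
    intro hE; linarith
  have h02 : τ 0 ≠ τ 2 := by
    show ¬ (-α) = t - α
    intro hE; exact ht0 (by linarith)
  have h12 : τ 1 ≠ τ 2 := by
    show ¬ (1 - α) = t - α
    intro hE; exact ht1 (by linarith)
  have hτne : ∀ i j : Fin 3, i ≠ j → τ i ≠ τ j := by
    intro i j hij
    fin_cases i <;> fin_cases j <;>
      first
        | exact absurd rfl hij
        | exact h01
        | exact h02
        | exact h12
        | exact Ne.symm h01
        | exact Ne.symm h02
        | exact Ne.symm h12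
  obtain ⟨i, j, hij, hpick⟩ := sgPick τ
  have hpi : p - pts i = w - τ i • d := by rw [hparam i, hpq]; abel
  have hji : pts j - pts i = (τ j - τ i) • d := by
    rw [hparam i, hparam j, sub_smul]; abel
  have hjp : pts j - p = τ j • d - w := by rw [hparam j, hpq]; abel
  have hcross : sgCross (p - pts i) (pts j - pts i) = (τ j - τ i) * sgCross w d := by
    rw [hpi, hji]
    simp only [sgCross, Pi.sub_apply, Pi.smul_apply, smul_eq_mul]
    ring
  refine ⟨pts i, pts j, ?_, ?_, ?_, ?_⟩
  · fin_cases i <;> simp [hpts]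
  · fin_cases j <;> simp [hpts]
  · rw [hcross]
    exact mul_ne_zero (sub_ne_zero.mpr (Ne.symm (hτne i j hij))) hcwd_ne
  · rw [hcross, hjp]
    have hden : sgSq (τ j • d - w) = τ j ^ 2 * sgSq d + sgSq w := by
      unfold sgSq
      simp only [Pi.sub_apply, Pi.smul_apply, smul_eq_mul]
      linear_combination (-2 * τ j) * hwd
    have hrhs : sgCross (a - p) (b - p) ^ 2 / sgSq (b - a) = sgSq w := by
      rw [← hd]
      have hnum3 : sgCross (a - p) (b - p) ^ 2 = sgSq w * sgSq d := by
        rw [← hnum2, hcwd]; ring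
      rw [hnum3, mul_div_assoc, div_self hs.ne', mul_one]
    rw [hrhs, hden]
    have hdenpos : (0:ℝ) < τ j ^ 2 * sgSq d + sgSq w := by nlinarith [sq_nonneg (τ j)]
    rw [div_lt_iff₀ hdenpos]
    have hkey : sgSq d * (τ i * (τ i - 2 * τ j)) ≤ 0 :=
      mul_nonpos_of_nonneg_of_nonpos hs.le hpick
    nlinarith [hnum2, hkey, mul_pos hh2 hh2]

end

/-- A line in `ℝ²`: an affine subspace whose direction has dimension 1. -/
def IsLine2 (L : AffineSubspace ℝ (Fin 2 → ℝ)) : Prop :=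
  Module.finrank ℝ L.direction = 1

/-- The ordinary lines of a point set: lines containing exactly two points of the set. -/
def ordinaryLines2 (P : Set (Fin 2 → ℝ)) : Set (AffineSubspace ℝ (Fin 2 → ℝ)) :=
  {L | IsLine2 L ∧ (P ∩ ↑L).ncard = 2}


theorem statement8 (P : Finset (Fin 2 → ℝ))
    (h : ¬ Collinear ℝ (↑P : Set (Fin 2 → ℝ))) :
    ∃ L : AffineSubspace ℝ (Fin 2 → ℝ), L ∈ ordinaryLines2 ↑P := by
  classical
  -- the finite set of noncollinear triples
  set S : Finset (SGPlane × SGPlane × SGPlane) :=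
    (P ×ˢ P ×ˢ P).filter (fun T => sgCross (T.2.1 - T.1) (T.2.2 - T.1) ≠ 0) with hS
  have hSne : S.Nonempty := by
    by_contra hne
    apply h
    apply sgCollinear
    intro p hp a ha b hb
    by_contra hcr
    exact hne ⟨(p, a, b), by
      rw [hS, Finset.mem_filter, Finset.mem_product, Finset.mem_product]
      exact ⟨⟨hp, ha, hb⟩, hcr⟩⟩
  obtain ⟨T₀, hT₀, hmin⟩ := S.exists_min_image
    (fun T => sgCross (T.2.1 - T.1) (T.2.2 - T.1) ^ 2 / sgSq (T.2.2 - T.2.1)) hSne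
  obtain ⟨p, a, b⟩ := T₀
  rw [hS, Finset.mem_filter, Finset.mem_product, Finset.mem_product] at hT₀
  obtain ⟨⟨hp, ha, hb⟩, hcr⟩ := hT₀
  simp only at hcr
  have hab : a ≠ b := by
    intro hE
    apply hcr
    simp only [hE, sgCross, Pi.sub_apply]
    ring
  refine ⟨affineSpan ℝ {a, b}, ?_, ?_⟩
  · -- it's a line
    unfold IsLine2
    rw [direction_affineSpan, vectorSpan_pair]
    exact finrank_span_singleton (sub_ne_zero.mpr hab)
  · -- exactly two points of `P` on it
    have hset : (↑P ∩ (affineSpan ℝ {a, b} : AffineSubspace ℝ SGPlane) : Set SGPlane)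
        = {a, b} := by
      apply Set.Subset.antisymm
      · rintro c ⟨hcP, hcL⟩
        by_contra hcab
        obtain ⟨hca, hcb⟩ : c ≠ a ∧ c ≠ b := by
          constructor <;> (intro hE; apply hcab; simp [hE])
        -- parametrize c on the line
        have hcL' : (c - a) +ᵥ a ∈ line[ℝ, a, b] := by
          simpa using hcL
        rw [vadd_left_mem_affineSpan_pair] at hcL'
        obtain ⟨t, ht⟩ := hcL'
        have hc' : c = t • (b - a) + a := by
          have ht' : t • (b - a) = c - a := ht
          rw [ht']; abel
        obtain ⟨q, r, hq, hr, hcr', hlt⟩ := sgCrux hcr hc' hca hcb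
        have hqP : q ∈ P := by rcases hq with rfl | rfl | rfl <;> assumption
        have hrP : r ∈ P := by rcases hr with rfl | rfl | rfl <;> assumption
        have hmem : (q, p, r) ∈ S := by
          rw [hS, Finset.mem_filter, Finset.mem_product, Finset.mem_product]
          exact ⟨⟨hqP, hp, hrP⟩, hcr'⟩
        have := hmin _ hmem
        simp only at this
        exact absurd (lt_of_lt_of_le hlt this) (lt_irrefl _)
      · intro c hc
        simp only [Set.mem_insert_iff, Set.mem_singleton_iff] at hc
        rcases hc with rfl | rfl
        · exact ⟨ha, (left_mem_affineSpan_pair ℝ c b)⟩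
        · exact ⟨hb, (right_mem_affineSpan_pair ℝ a c)⟩
    rw [hset]
    exact Set.ncard_pair hab
end

section
/- If a finite set of points in ℝ³ is not contained in a single line, then it spans an ordinary line. -/
open RealInnerProductSpace

section SG

variable {E : Type*} [NormedAddCommGroup E] [InnerProductSpace ℝ E]

private lemma triple_comm (a b c : E) : ({c, a, b} : Set E) = {a, b, c} := by
  ext x; simp only [Set.mem_insert_iff, Set.mem_singleton_iff]; tauto

/-- Collinearity of a triple, parametrically. -/
lemma collinear_triple_iff' {a b c : E} (hab : a ≠ b) :
    Collinear ℝ ({a, b, c} : Set E) ↔ ∃ t : ℝ, c = a + t • (b - a) := by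
  constructor
  · intro h
    obtain ⟨v, hv⟩ := (collinear_iff_of_mem (Set.mem_insert a {b, c})).1 h
    obtain ⟨rb, hb⟩ := hv b (by simp)
    obtain ⟨rc, hc⟩ := hv c (by simp)
    have hrb : rb ≠ 0 := by
      rintro rfl
      apply hab
      simpa using hb.symm
    refine ⟨rc / rb, ?_⟩
    have hbv : b - a = rb • v := by rw [hb]; simp [vadd_eq_add]
    rw [hc, hbv, smul_smul, div_mul_cancel₀ _ hrb, vadd_eq_add, add_comm]
  · rintro ⟨t, rfl⟩
    rw [← triple_comm]
    apply collinear_insert_of_mem_affineSpan_pair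
    have : a + t • (b - a) = t • (b - a) +ᵥ a := by rw [vadd_eq_add, add_comm]
    rw [this]
    exact vadd_left_mem_affineSpan_pair.2 ⟨t, by rw [vsub_eq_sub]⟩

private lemma inner_self_pos' {x : E} (hx : x ≠ 0) : 0 < ⟪x, x⟫ :=
  lt_of_le_of_ne real_inner_self_nonneg (Ne.symm (inner_self_ne_zero.2 hx))

private lemma inner_sub_smul_self (a b : E) (s : ℝ) :
    ⟪a - s • b, a - s • b⟫ = ⟪a, a⟫ - 2 * s * ⟪a, b⟫ + s ^ 2 * ⟪b, b⟫ := by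
  simp only [inner_sub_left, inner_sub_right, real_inner_smul_left, real_inner_smul_right]
  rw [real_inner_comm b a]; ring

/-- The foot of the perpendicular from `p` to the line through `a` and `b`. -/
noncomputable def foot (p a b : E) : E :=
  a + (⟪p - a, b - a⟫ / ⟪b - a, b - a⟫) • (b - a)

lemma foot_eq (p a b : E) :
    foot p a b = a + (⟪p - a, b - a⟫ / ⟪b - a, b - a⟫) • (b - a) := rfl

lemma foot_orth {a b : E} (p : E) (hab : a ≠ b) : ⟪p - foot p a b, b - a⟫ = 0 := by
  have hv : ⟪b - a, b - a⟫ ≠ 0 := ne_of_gt (inner_self_pos' (sub_ne_zero.2 (Ne.symm hab)))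
  rw [foot_eq]
  have h1 : p - (a + (⟪p - a, b - a⟫ / ⟪b - a, b - a⟫) • (b - a))
      = (p - a) - (⟪p - a, b - a⟫ / ⟪b - a, b - a⟫) • (b - a) := by module
  rw [h1, inner_sub_left, real_inner_smul_left, div_mul_cancel₀ _ hv, sub_self]

lemma foot_min {a b : E} (p : E) (hab : a ≠ b) (t : ℝ) :
    ⟪p - foot p a b, p - foot p a b⟫
      ≤ ⟪p - (a + t • (b - a)), p - (a + t • (b - a))⟫ := by
  have hq : p - (a + t • (b - a))
      = (p - foot p a b) - (t - ⟪p - a, b - a⟫ / ⟪b - a, b - a⟫) • (b - a) := by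
    rw [foot_eq]; module
  rw [hq, inner_sub_smul_self, foot_orth p hab]
  have h2 : 0 ≤ (t - ⟪p - a, b - a⟫ / ⟪b - a, b - a⟫) ^ 2 * ⟪b - a, b - a⟫ :=
    mul_nonneg (sq_nonneg _) real_inner_self_nonneg
  linarith

/-- The "good pair" predicate for Kelly's argument. -/
def Good (x y : ℝ) : Prop := (0 < x ∧ x < y) ∨ (y < x ∧ x < 0) ∨ x = 0

private lemma good_select {u v w : ℝ} (huv : u ≠ v) (huw : u ≠ w) (hvw : v ≠ w) :
    Good u v ∨ Good v u ∨ Good u w ∨ Good w u ∨ Good v w ∨ Good w v := by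
  have pos : ∀ x y : ℝ, 0 < x → 0 < y → x ≠ y → (Good x y ∨ Good y x) := by
    intro x y hx hy hxy
    rcases hxy.lt_or_gt with h | h
    · exact Or.inl (Or.inl ⟨hx, h⟩)
    · exact Or.inr (Or.inl ⟨hy, h⟩)
  have neg : ∀ x y : ℝ, x < 0 → y < 0 → x ≠ y → (Good x y ∨ Good y x) := by
    intro x y hx hy hxy
    rcases hxy.lt_or_gt with h | h
    · exact Or.inr (Or.inr (Or.inl ⟨h, hy⟩))
    · exact Or.inl (Or.inr (Or.inl ⟨h, hx⟩))
  rcases lt_trichotomy u 0 with hu | hu | hu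
  · rcases lt_trichotomy v 0 with hv | hv | hv
    · rcases neg u v hu hv huv with g | g
      · exact Or.inl g
      · exact Or.inr (Or.inl g)
    · exact Or.inr (Or.inl (Or.inr (Or.inr hv)))
    · rcases lt_trichotomy w 0 with hw | hw | hw
      · rcases neg u w hu hw huw with g | g
        · exact Or.inr (Or.inr (Or.inl g))
        · exact Or.inr (Or.inr (Or.inr (Or.inl g)))
      · exact Or.inr (Or.inr (Or.inr (Or.inl (Or.inr (Or.inr hw)))))
      · rcases pos v w hv hw hvw with g | g
        · exact Or.inr (Or.inr (Or.inr (Or.inr (Or.inl g))))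
        · exact Or.inr (Or.inr (Or.inr (Or.inr (Or.inr g))))
  · exact Or.inl (Or.inr (Or.inr hu))
  · rcases lt_trichotomy v 0 with hv | hv | hv
    · rcases lt_trichotomy w 0 with hw | hw | hw
      · rcases neg v w hv hw hvw with g | g
        · exact Or.inr (Or.inr (Or.inr (Or.inr (Or.inl g))))
        · exact Or.inr (Or.inr (Or.inr (Or.inr (Or.inr g))))
      · exact Or.inr (Or.inr (Or.inr (Or.inl (Or.inr (Or.inr hw)))))
      · rcases pos u w hu hw huw with g | g
        · exact Or.inr (Or.inr (Or.inl g))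
        · exact Or.inr (Or.inr (Or.inr (Or.inl g)))
    · exact Or.inr (Or.inl (Or.inr (Or.inr hv)))
    · rcases pos u v hu hv huv with g | g
      · exact Or.inl g
      · exact Or.inr (Or.inl g)

private lemma kelly_A {p q x y v : E} {sx sy : ℝ}
    (hx : x = q + sx • v) (hy : y = q + sy • v) (hpq : p ≠ q)
    (hsy : sy ≠ 0) (h0 : 0 < sx / sy) (h1 : sx / sy < 1) :
    ∃ z : E, (∃ u : ℝ, z = p + u • (y - p)) ∧ ⟪x - z, x - z⟫ < ⟪p - q, p - q⟫ := by
  have hK : 0 < ⟪p - q, p - q⟫ := inner_self_pos' (sub_ne_zero.2 hpq)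
  have hqp : ⟪q - p, q - p⟫ = ⟪p - q, p - q⟫ := by
    rw [show q - p = -(p - q) from (neg_sub p q).symm, inner_neg_neg]
  refine ⟨p + (sx / sy) • (y - p), ⟨_, rfl⟩, ?_⟩
  have hmul : (sx / sy) * sy = sx := div_mul_cancel₀ _ hsy
  have hxz : x - (p + (sx / sy) • (y - p)) = (q - p) - (sx / sy) • (q - p) := by
    rw [hx, hy]
    match_scalars <;> field_simp <;> ring
  rw [hxz, inner_sub_smul_self, hqp]
  have hs2 : 0 < 2 - sx / sy := by linarith
  have := mul_pos (mul_pos hK h0) hs2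
  nlinarith [this]

private lemma kelly_B {p q y v : E} {sy : ℝ}
    (hy : y = q + sy • v) (horth : ⟪p - q, v⟫ = 0) (hpq : p ≠ q) :
    ∃ z : E, (∃ u : ℝ, z = p + u • (y - p)) ∧ ⟪q - z, q - z⟫ < ⟪p - q, p - q⟫ := by
  have hK : 0 < ⟪p - q, p - q⟫ := inner_self_pos' (sub_ne_zero.2 hpq)
  have hqp : ⟪q - p, q - p⟫ = ⟪p - q, p - q⟫ := by
    rw [show q - p = -(p - q) from (neg_sub p q).symm, inner_neg_neg]
  have hqpv : ⟪q - p, v⟫ = 0 := by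
    rw [show q - p = -(p - q) from (neg_sub p q).symm, inner_neg_left, horth, neg_zero]
  have hiqy : ⟪q - p, y - p⟫ = ⟪p - q, p - q⟫ := by
    have h' : y - p = sy • v + (q - p) := by rw [hy]; module
    rw [h', inner_add_right, real_inner_smul_right, hqpv, hqp]; ring
  have hyp : (0 : ℝ) < ⟪y - p, y - p⟫ := by
    rcases eq_or_ne y p with h | h
    · exfalso
      rw [h, sub_self, inner_zero_right] at hiqy
      linarith
    · exact inner_self_pos' (sub_ne_zero.2 h)
  set M := ⟪y - p, y - p⟫ with hM
  set K := ⟪p - q, p - q⟫ with hKdef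
  refine ⟨p + (K / M) • (y - p), ⟨_, rfl⟩, ?_⟩
  have hqz : q - (p + (K / M) • (y - p)) = (q - p) - (K / M) • (y - p) := by module
  rw [hqz, inner_sub_smul_self, hiqy, hqp]
  have hsM : (K / M) * M = K := div_mul_cancel₀ _ (ne_of_gt hyp)
  have hs : 0 < K / M := div_pos hK hyp
  have h2 : (K / M) ^ 2 * M = (K / M) * K := by rw [sq, mul_assoc, hsM]
  have h3 : 0 < (K / M) * K := mul_pos hs hK
  linarith

private lemma kelly_ineq {p q x y v : E} {sx sy : ℝ}
    (hx : x = q + sx • v) (hy : y = q + sy • v)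
    (horth : ⟪p - q, v⟫ = 0) (hpq : p ≠ q) (hxy : x ≠ y) (hgood : Good sx sy) :
    ∃ z : E, (∃ u : ℝ, z = p + u • (y - p)) ∧ ⟪x - z, x - z⟫ < ⟪p - q, p - q⟫ := by
  rcases hgood with ⟨h1, h2⟩ | ⟨h1, h2⟩ | h0
  · have hsy : sy ≠ 0 := by intro h; rw [h] at h2; linarith
    exact kelly_A hx hy hpq hsy (div_pos h1 (by linarith))
      ((div_lt_one (by linarith)).2 h2)
  · have hsy : sy ≠ 0 := by intro h; rw [h] at h1; linarith
    have h0' : 0 < sx / sy := div_pos_iff.2 (Or.inr ⟨h2, by linarith⟩)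
    have h1' : sx / sy < 1 := by
      rw [div_lt_one_iff]
      exact Or.inr (Or.inr ⟨by linarith, h1⟩)
    exact kelly_A hx hy hpq hsy h0' h1'
  · have hxq : x = q := by rw [hx, h0, zero_smul, add_zero]
    obtain ⟨z, hz, hlt⟩ := kelly_B hy horth hpq
    exact ⟨z, hz, by rwa [hxq]⟩

/-- Sylvester–Gallai in a real inner product space. -/
theorem sg (S : Finset E) (h : ¬ Collinear ℝ (S : Set E)) :
    ∃ a ∈ S, ∃ b ∈ S, a ≠ b ∧
      ∀ c ∈ S, Collinear ℝ ({a, b, c} : Set E) → c = a ∨ c = b := by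
  classical
  -- there is a non-collinear triple
  have hex : ∃ p ∈ S, ∃ a ∈ S, ∃ b ∈ S, ¬ Collinear ℝ ({a, b, p} : Set E) := by
    by_contra hc
    push_neg at hc
    apply h
    by_cases hss : ∃ a ∈ S, ∃ b ∈ S, a ≠ b
    · obtain ⟨a, ha, b, hb, hab⟩ := hss
      rw [collinear_iff_of_mem (show a ∈ (S : Set E) from ha)]
      refine ⟨b - a, fun p hp => ?_⟩
      obtain ⟨t, ht⟩ := (collinear_triple_iff' hab).1 (hc p hp a ha b hb)
      exact ⟨t, by rw [ht, vadd_eq_add, add_comm]⟩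
    · push_neg at hss
      rcases Finset.eq_empty_or_nonempty S with rfl | ⟨a, ha⟩
      · simpa using collinear_empty ℝ E
      · rw [collinear_iff_of_mem (show a ∈ (S : Set E) from ha)]
        exact ⟨0, fun p hp => ⟨0, by rw [hss p hp a ha]; simp⟩⟩
  -- the set of non-collinear triples
  set T : Finset (E × E × E) :=
    (S ×ˢ S ×ˢ S).filter (fun m => ¬ Collinear ℝ ({m.2.1, m.2.2, m.1} : Set E)) with hT
  have hTne : T.Nonempty := by
    obtain ⟨p, hp, a, ha, b, hb, hnc⟩ := hex
    exact ⟨(p, a, b), by simp [hT, Finset.mem_filter, Finset.mem_product, hp, ha, hb, hnc]⟩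
  obtain ⟨m, hmT, hmin⟩ := T.exists_min_image
    (fun m => ⟪m.1 - foot m.1 m.2.1 m.2.2, m.1 - foot m.1 m.2.1 m.2.2⟫) hTne
  obtain ⟨p, a, b⟩ := m
  rw [hT, Finset.mem_filter, Finset.mem_product, Finset.mem_product] at hmT
  obtain ⟨⟨hpS, haS, hbS⟩, hnc⟩ := hmT
  simp only at hnc hmin ⊢
  have hab : a ≠ b := by
    rintro rfl
    exact hnc ((collinear_pair ℝ a p).subset (by intro x hx; simp at hx ⊢; tauto))
  set v : E := b - a with hv
  have hvne : v ≠ 0 := sub_ne_zero.2 (Ne.symm hab)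
  have hpnot : ∀ t : ℝ, p ≠ a + t • v := by
    intro t hp
    exact hnc ((collinear_triple_iff' hab).2 ⟨t, hp⟩)
  set r : ℝ := ⟪p - a, v⟫ / ⟪v, v⟫ with hr
  set q : E := foot p a b with hqdef
  have hq : q = a + r • v := rfl
  have horth : ⟪p - q, v⟫ = 0 := foot_orth p hab
  have hpq : p ≠ q := by rw [hq]; exact hpnot r
  -- the key step: no good configuration can exist
  have key : ∀ x, x ∈ S → ∀ y, y ∈ S → ∀ sx sy : ℝ,
      x = q + sx • v → y = q + sy • v → x ≠ y → Good sx sy → False := by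
    intro x hxS y hyS sx sy hx hy hxy hgood
    obtain ⟨z, ⟨uz, hz⟩, hlt⟩ := kelly_ineq hx hy horth hpq hxy hgood
    have hx' : x = a + (r + sx) • v := by rw [hx, hq]; module
    have hy' : y = a + (r + sy) • v := by rw [hy, hq]; module
    have hpy : p ≠ y := by
      intro hpy'
      exact hpnot (r + sy) (by rw [← hy']; exact hpy')
    have hncol : ¬ Collinear ℝ ({p, y, x} : Set E) := by
      intro hcol
      obtain ⟨u, hu⟩ := (collinear_triple_iff' hpy).1 hcol
      by_cases hu1 : u = 1
      · apply hxy
        rw [hu, hu1, one_smul]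
        abel
      · have h1u : (1 : ℝ) - u ≠ 0 := sub_ne_zero.2 (Ne.symm hu1)
        have hp' : (1 - u) • p
            = (1 - u) • (a + (((r + sx) - u * (r + sy)) / (1 - u)) • v) := by
          have e1 : (1 - u) • p = x - u • y := by rw [hu]; module
          have e2 : x - u • y = (1 - u) • a + ((r + sx) - u * (r + sy)) • v := by
            rw [hx', hy']; module
          rw [e1, e2, smul_add, smul_smul, mul_div_cancel₀ _ h1u]
        exact hpnot _ (smul_right_injective E h1u hp')
    have hmem : (x, p, y) ∈ T := by
      rw [hT, Finset.mem_filter, Finset.mem_product, Finset.mem_product]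
      exact ⟨⟨hxS, hpS, hyS⟩, hncol⟩
    have h1 := hmin _ hmem
    simp only at h1
    have h2 := foot_min (a := p) (b := y) x hpy uz
    rw [← hz] at h2
    have h3 : ⟪p - foot p a b, p - foot p a b⟫ = ⟪p - q, p - q⟫ := by rw [← hqdef]
    rw [h3] at h1
    linarith
  refine ⟨a, haS, b, hbS, hab, ?_⟩
  intro c hcS hcol
  by_contra hne
  push_neg at hne
  obtain ⟨tc, htc⟩ := (collinear_triple_iff' hab).1 hcol
  have ha' : a = q + (0 - r) • v := by rw [hq]; module
  have hb' : b = q + (1 - r) • v := by rw [hq]; module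
  have hc' : c = q + (tc - r) • v := by rw [htc, hq]; module
  have htc0 : tc ≠ 0 := by
    intro h0
    exact hne.1 (by rw [htc, h0]; simp)
  have htc1 : tc ≠ 1 := by
    intro h0
    apply hne.2
    rw [htc, h0, one_smul]
    abel
  have h1 : (0 : ℝ) - r ≠ 1 - r := by intro hh; linarith
  have h2 : (0 : ℝ) - r ≠ tc - r := by
    intro hh; apply htc0; linarith
  have h3 : (1 : ℝ) - r ≠ tc - r := by
    intro hh; apply htc1; linarith
  have hca : c ≠ a := hne.1
  have hcb : c ≠ b := hne.2
  rcases good_select h1 h2 h3 with g | g | g | g | g | g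
  · exact key a haS b hbS _ _ ha' hb' hab g
  · exact key b hbS a haS _ _ hb' ha' (Ne.symm hab) g
  · exact key a haS c hcS _ _ ha' hc' (Ne.symm hca) g
  · exact key c hcS a haS _ _ hc' ha' hca g
  · exact key b hbS c hcS _ _ hb' hc' (Ne.symm hcb) g
  · exact key c hcS b hbS _ _ hc' hb' hcb g

end SG

section Transfer

private lemma collinear_image {F G : Type*} [AddCommGroup F] [Module ℝ F]
    [AddCommGroup G] [Module ℝ G] (f : F →ₗ[ℝ] G) {s : Set F}
    (h : Collinear ℝ s) : Collinear ℝ (f '' s) := by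
  rw [collinear_iff_exists_forall_eq_smul_vadd] at h ⊢
  obtain ⟨p₀, v, hv⟩ := h
  refine ⟨f p₀, f v, ?_⟩
  rintro _ ⟨x, hx, rfl⟩
  obtain ⟨t, ht⟩ := hv x hx
  exact ⟨t, by rw [ht]; simp [vadd_eq_add]⟩

end Transfer

theorem statement9 (P : Finset (Fin 3 → ℝ))
    (h : ¬ Collinear ℝ (↑P : Set (Fin 3 → ℝ))) :
    ∃ L : AffineSubspace ℝ (Fin 3 → ℝ), L ∈ ordinaryLines3 ↑P := by
  classical
  set e : (Fin 3 → ℝ) ≃ₗ[ℝ] EuclideanSpace ℝ (Fin 3) :=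
    (WithLp.linearEquiv 2 ℝ (Fin 3 → ℝ)).symm with he
  set S : Finset (EuclideanSpace ℝ (Fin 3)) := P.image e with hSdef
  have hS : ¬ Collinear ℝ (S : Set (EuclideanSpace ℝ (Fin 3))) := by
    intro hcol
    apply h
    have himg : (e.symm : EuclideanSpace ℝ (Fin 3) →ₗ[ℝ] (Fin 3 → ℝ)) '' (S : Set _)
        = (↑P : Set (Fin 3 → ℝ)) := by
      rw [hSdef, Finset.coe_image, ← Set.image_comp]
      simp
    rw [← himg]
    exact collinear_image _ hcol
  obtain ⟨a, haS, b, hbS, hab, hkey⟩ := sg S hS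
  obtain ⟨a', haP, ha'⟩ := Finset.mem_image.1 haS
  obtain ⟨b', hbP, hb'⟩ := Finset.mem_image.1 hbS
  have hab' : a' ≠ b' := by
    intro hh
    apply hab
    rw [← ha', ← hb', hh]
  have hprop : ∀ c' ∈ P, Collinear ℝ ({a', b', c'} : Set (Fin 3 → ℝ)) →
      c' = a' ∨ c' = b' := by
    intro c' hc' hcol
    have himg2 : (e : (Fin 3 → ℝ) →ₗ[ℝ] EuclideanSpace ℝ (Fin 3)) ''
        ({a', b', c'} : Set (Fin 3 → ℝ)) = {a, b, e c'} := by
      rw [Set.image_insert_eq, Set.image_insert_eq, Set.image_singleton]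
      simp only [LinearEquiv.coe_coe]
      rw [ha', hb']
    have hcol2 : Collinear ℝ ({a, b, e c'} : Set (EuclideanSpace ℝ (Fin 3))) := by
      rw [← himg2]
      exact collinear_image _ hcol
    rcases hkey (e c') (Finset.mem_image_of_mem _ hc') hcol2 with hh | hh
    · left; rw [← ha'] at hh; exact e.injective hh
    · right; rw [← hb'] at hh; exact e.injective hh
  refine ⟨line[ℝ, a', b'], ?_, ?_⟩
  · show Module.finrank ℝ (line[ℝ, a', b'] : AffineSubspace ℝ (Fin 3 → ℝ)).direction = 1
    rw [direction_affineSpan, vectorSpan_pair]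
    exact finrank_span_singleton (vsub_ne_zero.2 hab')
  · show ((↑P : Set (Fin 3 → ℝ)) ∩ ↑(line[ℝ, a', b'])).ncard = 2
    have hset : (↑P : Set (Fin 3 → ℝ)) ∩ ↑(line[ℝ, a', b']) = {a', b'} := by
      ext x
      constructor
      · rintro ⟨hxP, hxL⟩
        have hcol : Collinear ℝ ({a', b', x} : Set (Fin 3 → ℝ)) :=
          (collinear_insert_of_mem_affineSpan_pair hxL).subset
            (by intro y hy; simp at hy ⊢; tauto)
        rcases hprop x hxP hcol with hh | hh
        · exact Or.inl hh
        · exact Or.inr hh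
      · intro hx
        rcases hx with rfl | rfl
        · exact ⟨haP, left_mem_affineSpan_pair ℝ _ _⟩
        · exact ⟨hbP, right_mem_affineSpan_pair ℝ _ _⟩
    rw [hset]
    exact Set.ncard_pair hab'
end

section
/- Let α > 1/2, let P be a set of n points in ℝ³, and suppose some plane π contains exactly α·n points of P. Then P spans at least (1 − α)(2α − 1)n² ordinary lines. -/
/-!
Split `P` into the `k` points on `π` and the `m` points off it. A line through a point `x ∉ π`
meets `π` at most once, so the `k` lines joining `x` to the points of `P ∩ π` are distinct, and
one of them that is not ordinary contains a further point of `P`, necessarily off `π`; hence at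
most `m` of them fail to be ordinary. An ordinary line of this kind determines its pair
`(x, q)`, so there are at least `m * (k - m)` ordinary lines, which is
`(1 - α)(2α - 1)n²` when `k = αn`.
-/

open Finset

section AffineLines

variable {k V P : Type*} [DivisionRing k] [AddCommGroup V] [Module k V] [AddTorsor V P]

theorem finrank_direction_affineSpan_pair {x y : P} (h : x ≠ y) :
    Module.finrank k line[k, x, y].direction = 1 := by
  rw [direction_affineSpan, vectorSpan_pair]
  exact finrank_span_singleton (vsub_ne_zero.2 h)

theorem AffineSubspace.affineSpan_pair_eq_of_finrank_direction_eq_one {L : AffineSubspace k P}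
    (hL : Module.finrank k L.direction = 1) {x y : P} (hx : x ∈ L) (hy : y ∈ L) (h : x ≠ y) :
    line[k, x, y] = L := by
  have : FiniteDimensional k L.direction := Module.finite_of_finrank_eq_succ hL
  have hle := affineSpan_pair_le_of_mem_of_mem hx hy
  refine eq_of_direction_eq_of_nonempty_of_le ?_ ⟨x, left_mem_affineSpan_pair k x y⟩ hle
  exact Submodule.eq_of_le_of_finrank_eq (direction_le hle)
    (by rw [finrank_direction_affineSpan_pair h, hL])

theorem AffineSubspace.eq_of_mem_affineSpan_pair_of_notMem {s : AffineSubspace k P} {x q q' : P}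
    (hx : x ∉ s) (hq : q ∈ s) (hq' : q' ∈ s) (hq'x : q' ∈ line[k, x, q]) : q' = q := by
  by_contra hne
  have hxl := left_mem_affineSpan_pair k x q
  rw [← affineSpan_pair_eq_of_left_mem_of_ne hq'x hne] at hxl
  exact hx (affineSpan_pair_le_of_mem_of_mem hq' hq hxl)

theorem AffineSubspace.injOn_affineSpan_pair_of_notMem {s : AffineSubspace k P} {x : P}
    (hx : x ∉ s) : Set.InjOn (fun q => line[k, x, q]) s := by
  intro q hq q' hq' h
  have hq'x := right_mem_affineSpan_pair k x q'
  rw [← show line[k, x, q] = line[k, x, q'] from h] at hq'x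
  exact (eq_of_mem_affineSpan_pair_of_notMem hx hq hq' hq'x).symm

end AffineLines

theorem finite_ordinaryLines3 (P : Finset (Fin 3 → ℝ)) : (ordinaryLines3 ↑P).Finite := by
  refine ((P.finite_toSet.prod P.finite_toSet).image
    fun p : (Fin 3 → ℝ) × (Fin 3 → ℝ) => line[ℝ, p.1, p.2]).subset ?_
  rintro L ⟨hL, hcard⟩
  obtain ⟨a, b, hab, hPL⟩ := Set.ncard_eq_two.1 hcard
  have ha : a ∈ (↑P ∩ L : Set _) := hPL ▸ Set.mem_insert a {b}
  have hb : b ∈ (↑P ∩ L : Set _) := hPL ▸ Set.mem_insert_of_mem a rfl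
  exact ⟨(a, b), ⟨ha.1, hb.1⟩,
    AffineSubspace.affineSpan_pair_eq_of_finrank_direction_eq_one hL ha.2 hb.2 hab⟩

section OrdinaryLines

variable {P : Finset (Fin 3 → ℝ)}

theorem affineSpan_pair_mem_ordinaryLines3_iff {x y : Fin 3 → ℝ} (hx : x ∈ P) (hy : y ∈ P)
    (hxy : x ≠ y) :
    line[ℝ, x, y] ∈ ordinaryLines3 ↑P ↔ ∀ z ∈ P, z ∈ line[ℝ, x, y] → z = x ∨ z = y := by
  have hsub : ({x, y} : Set (Fin 3 → ℝ)) ⊆ ↑P ∩ ↑line[ℝ, x, y] :=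
    Set.insert_subset_iff.2 ⟨⟨hx, left_mem_affineSpan_pair ℝ x y⟩,
      Set.singleton_subset_iff.2 ⟨hy, right_mem_affineSpan_pair ℝ x y⟩⟩
  have hfin : (↑P ∩ ↑line[ℝ, x, y] : Set (Fin 3 → ℝ)).Finite :=
    P.finite_toSet.inter_of_left _
  simp only [ordinaryLines3, IsLine3, Set.mem_ofPred_eq, finrank_direction_affineSpan_pair hxy,
    true_and]
  constructor
  · intro h z hz hzl
    have hPL := Set.eq_of_subset_of_ncard_le hsub (by rw [h, Set.ncard_pair hxy]) hfin
    simpa using hPL.symm.subset ⟨hz, hzl⟩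
  · intro h
    rw [← Set.ncard_pair hxy]
    congr 1
    exact (Set.Subset.antisymm hsub fun z ⟨hz, hzl⟩ => by simpa using h z hz hzl).symm

open scoped Classical in
theorem card_filter_mem_le_card_filter_ordinary_add {π : AffineSubspace ℝ (Fin 3 → ℝ)}
    {x : Fin 3 → ℝ} (hxP : x ∈ P) (hx : x ∉ π) :
    #{q ∈ P | q ∈ π} ≤
      #{q ∈ P | q ∈ π ∧ line[ℝ, x, q] ∈ ordinaryLines3 ↑P} + #{y ∈ P | y ∉ π} := by
  set bad := {q ∈ P | q ∈ π ∧ line[ℝ, x, q] ∉ ordinaryLines3 ↑P}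
  have hbad : bad.image (fun q => line[ℝ, x, q]) ⊆
      {y ∈ P | y ∉ π}.image (fun y => line[ℝ, x, y]) := by
    intro L hL
    obtain ⟨q, hq, rfl⟩ := mem_image.1 hL
    obtain ⟨hqP, hqπ, hnot⟩ := mem_filter.1 hq
    rw [affineSpan_pair_mem_ordinaryLines3_iff hxP hqP fun h => hx (h ▸ hqπ)] at hnot
    push Not at hnot
    obtain ⟨y, hyP, hyl, hyx, hyq⟩ := hnot
    have hyπ : y ∉ π := fun hyπ => hyq (π.eq_of_mem_affineSpan_pair_of_notMem hx hqπ hyπ hyl)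
    exact mem_image.2 ⟨y, mem_filter.2 ⟨hyP, hyπ⟩, affineSpan_pair_eq_of_right_mem_of_ne hyl hyx⟩
  have hinj : Set.InjOn (fun q => line[ℝ, x, q]) bad :=
    (π.injOn_affineSpan_pair_of_notMem hx).mono fun q hq => (mem_filter.1 hq).2.1
  calc #{q ∈ P | q ∈ π}
      = #{q ∈ P | q ∈ π ∧ line[ℝ, x, q] ∈ ordinaryLines3 ↑P} + #bad := by
        rw [← card_filter_add_card_filter_not (s := {q ∈ P | q ∈ π})
          (fun q => line[ℝ, x, q] ∈ ordinaryLines3 ↑P), filter_filter, filter_filter]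
    _ ≤ _ := by
      rw [← card_image_of_injOn hinj]
      exact add_le_add_right ((card_le_card hbad).trans card_image_le) _

open scoped Classical in
theorem card_filter_ordinary_pairs_le_ncard (π : AffineSubspace ℝ (Fin 3 → ℝ)) :
    #{p ∈ {y ∈ P | y ∉ π} ×ˢ {q ∈ P | q ∈ π} | line[ℝ, p.1, p.2] ∈ ordinaryLines3 ↑P} ≤
      (ordinaryLines3 ↑P).ncard := by
  rw [← Set.ncard_coe_finset]
  refine Set.ncard_le_ncard_of_injOn (fun p => line[ℝ, p.1, p.2])
    (fun p hp => (mem_filter.1 hp).2) ?_ (finite_ordinaryLines3 P)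
  rintro ⟨x, q⟩ hp ⟨x', q'⟩ hp' h
  simp only [coe_filter, mem_product, mem_filter, Set.mem_ofPred_eq] at hp hp' h
  obtain ⟨⟨⟨hxP, hx⟩, hqP, hq⟩, hord⟩ := hp
  obtain ⟨⟨⟨hx'P, hx'⟩, hq'P, hq'⟩, -⟩ := hp'
  rw [affineSpan_pair_mem_ordinaryLines3_iff hxP hqP fun h => hx (h ▸ hq), h] at hord
  have hx'x := (hord x' hx'P (left_mem_affineSpan_pair ℝ x' q')).resolve_right
    fun h => hx' (h ▸ hq)
  have hq'q := (hord q' hq'P (right_mem_affineSpan_pair ℝ x' q')).resolve_left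
    fun h => hx (h ▸ hq')
  rw [hx'x, hq'q]

open scoped Classical in
theorem card_mul_card_le_ncard_ordinaryLines3_add (π : AffineSubspace ℝ (Fin 3 → ℝ)) :
    #{y ∈ P | y ∉ π} * #{q ∈ P | q ∈ π} ≤
      (ordinaryLines3 ↑P).ncard + #{y ∈ P | y ∉ π} * #{y ∈ P | y ∉ π} := by
  set R := {y ∈ P | y ∉ π}
  calc #R * #{q ∈ P | q ∈ π}
      = ∑ x ∈ R, #{q ∈ P | q ∈ π} := by rw [sum_const, smul_eq_mul]
    _ ≤ ∑ x ∈ R, (#{q ∈ P | q ∈ π ∧ line[ℝ, x, q] ∈ ordinaryLines3 ↑P} + #R) :=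
        sum_le_sum fun x hx =>
          card_filter_mem_le_card_filter_ordinary_add (mem_filter.1 hx).1 (mem_filter.1 hx).2
    _ = #{p ∈ R ×ˢ {q ∈ P | q ∈ π} | line[ℝ, p.1, p.2] ∈ ordinaryLines3 ↑P} + #R * #R := by
        rw [sum_add_distrib, sum_const, smul_eq_mul, card_filter _ (R ×ˢ _), sum_product]
        congr 1
        refine sum_congr rfl fun x _ => ?_
        rw [← filter_filter, card_filter]
    _ ≤ _ := Nat.add_le_add_right (card_filter_ordinary_pairs_le_ncard π) _

end OrdinaryLines

theorem statement12_general (α : ℝ) (n : ℕ) (P : Finset (Fin 3 → ℝ))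
    (hP : P.card = n) (π : AffineSubspace ℝ (Fin 3 → ℝ))
    (hcount : (((↑P : Set (Fin 3 → ℝ)) ∩ ↑π).ncard : ℝ) = α * n) :
    (1 - α) * (2 * α - 1) * n ^ 2 ≤ ((ordinaryLines3 ↑P).ncard : ℝ) := by
  classical
  have hinter : ((↑P : Set (Fin 3 → ℝ)) ∩ ↑π).ncard = #{q ∈ P | q ∈ π} := by
    rw [← Set.ncard_coe_finset, coe_filter]
    rfl
  have hsplit : #{q ∈ P | q ∈ π} + #{y ∈ P | y ∉ π} = n :=
    hP ▸ card_filter_add_card_filter_not _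
  have hbound := card_mul_card_le_ncard_ordinaryLines3_add (P := P) π
  rw [hinter] at hcount
  set k := #{q ∈ P | q ∈ π}
  set m := #{y ∈ P | y ∉ π}
  have hm : (m : ℝ) = (1 - α) * n := by
    rw [← hsplit] at hcount ⊢
    push_cast at hcount ⊢
    linarith
  calc (1 - α) * (2 * α - 1) * n ^ 2 = m * k - m * m := by rw [hm, hcount]; ring
    _ ≤ _ := by
      rw [sub_le_iff_le_add]
      exact_mod_cast hbound

theorem statement12 (α : ℝ) (hα : 1 / 2 < α) (n : ℕ) (P : Finset (Fin 3 → ℝ))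
    (hP : P.card = n) (π : AffineSubspace ℝ (Fin 3 → ℝ)) (hπ : IsPlane3 π)
    (hcount : (((↑P : Set (Fin 3 → ℝ)) ∩ ↑π).ncard : ℝ) = α * n) :
    (1 - α) * (2 * α - 1) * n ^ 2 ≤ ((ordinaryLines3 ↑P).ncard : ℝ) :=
  statement12_general α n P hP π hcount
end

section
/- Let P be a finite set of points in ℝ² that is not contained in a single line, let p ∈ P, and suppose that every line that contains p and at least one other point of P contains at least three points of P. Then P spans an ordinary line that does not contain p. -/
lemma exists_notMem_affineSpan_pair_of_not_collinear {k V P : Type*} [DivisionRing k]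
    [AddCommGroup V] [Module k V] [AddTorsor V P] {s : Set P} (hs : ¬ Collinear k s) :
    ∃ x ∈ s, ∃ a ∈ s, ∃ b ∈ s, a ≠ b ∧ x ∉ line[k, a, b] := by
  by_contra! h
  rcases s.subsingleton_or_nontrivial with hsub | ⟨a, ha, b, hb, hab⟩
  · rcases hsub.eq_empty_or_singleton with rfl | ⟨p, rfl⟩
    exacts [hs (collinear_empty k P), hs (collinear_singleton k p)]
  · refine hs (Collinear.subset (fun x hx => h x hx a ha b hb hab) ?_)
    rw [Collinear, ← AffineSubspace.direction_eq_vectorSpan, direction_affineSpan]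
    exact collinear_pair k a b

namespace SylvesterGallai

variable {a b c d m x : Fin 2 → ℝ}

def cross (u v : Fin 2 → ℝ) : ℝ := u 0 * v 1 - u 1 * v 0

/-- The squared Euclidean distance from `x` to `line[ℝ, a, b]`, as twice the area of the triangle
`x a b` over its base; written out because the norm on `Fin 2 → ℝ` is the sup norm. -/
noncomputable def sqDistToLine (x a b : Fin 2 → ℝ) : ℝ :=
  cross (x - a) (b - a) ^ 2 / ((b - a) ⬝ᵥ (b - a))

lemma cross_sq_add_dotProduct_sq (u v : Fin 2 → ℝ) :
    cross u v ^ 2 + (u ⬝ᵥ v) ^ 2 = (u ⬝ᵥ u) * (v ⬝ᵥ v) := by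
  simp only [cross, dotProduct, Fin.sum_univ_two]
  ring

lemma dotProduct_self_pos {v : Fin 2 → ℝ} (hv : v ≠ 0) : 0 < v ⬝ᵥ v := by
  simpa using Matrix.dotProduct_self_star_pos_iff.mpr hv

lemma exists_eq_smul_of_cross_eq_zero {u v : Fin 2 → ℝ} (hv : v ≠ 0) (h : cross u v = 0) :
    ∃ r : ℝ, u = r • v := by
  unfold cross at h
  by_cases hv0 : v 0 = 0
  · have hv1 : v 1 ≠ 0 := fun hv1 => hv (funext fun i => by fin_cases i <;> assumption)
    refine ⟨u 1 / v 1, funext fun i => ?_⟩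
    fin_cases i <;> simp only [Fin.zero_eta, Fin.mk_one, Pi.smul_apply, smul_eq_mul] <;> field_simp
    linarith
  · refine ⟨u 0 / v 0, funext fun i => ?_⟩
    fin_cases i <;> simp only [Fin.zero_eta, Fin.mk_one, Pi.smul_apply, smul_eq_mul] <;> field_simp
    linarith

lemma mem_affineSpan_pair_iff_cross_eq_zero (hab : a ≠ b) :
    x ∈ line[ℝ, a, b] ↔ cross (x - a) (b - a) = 0 := by
  rw [mem_affineSpan_pair_iff_exists_lineMap_eq]
  constructor
  · rintro ⟨r, rfl⟩
    simp only [cross, AffineMap.lineMap_apply_module', Pi.add_apply, Pi.sub_apply,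
      Pi.smul_apply, smul_eq_mul]
    ring
  · intro h
    obtain ⟨r, hr⟩ := exists_eq_smul_of_cross_eq_zero (sub_ne_zero.mpr hab.symm) h
    exact ⟨r, by rw [AffineMap.lineMap_apply_module', ← hr, sub_add_cancel]⟩

lemma isLine2_affineSpan_pair (hab : a ≠ b) : IsLine2 line[ℝ, a, b] := by
  rw [IsLine2, direction_affineSpan, vectorSpan_pair]
  exact finrank_span_singleton (vsub_ne_zero.mpr hab)

lemma sqDistToLine_eq_of_mem (hc : c ∈ line[ℝ, a, b]) (hd : d ∈ line[ℝ, a, b]) (hcd : c ≠ d) :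
    sqDistToLine x c d = sqDistToLine x a b := by
  obtain ⟨s, hs⟩ := mem_affineSpan_pair_iff_exists_lineMap_eq.mp hc
  obtain ⟨t, ht⟩ := mem_affineSpan_pair_iff_exists_lineMap_eq.mp hd
  have hst : t - s ≠ 0 := sub_ne_zero.mpr fun h => hcd (by rw [← hs, ← ht, h])
  have hcross : cross (x - c) (d - c) = (t - s) * cross (x - a) (b - a) := by
    simp only [← hs, ← ht, cross, AffineMap.lineMap_apply_module', Pi.add_apply, Pi.sub_apply,
      Pi.smul_apply, smul_eq_mul]
    ring
  have hdot : (d - c) ⬝ᵥ (d - c) = (t - s) ^ 2 * ((b - a) ⬝ᵥ (b - a)) := by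
    simp only [← hs, ← ht, dotProduct, Fin.sum_univ_two, AffineMap.lineMap_apply_module',
      Pi.add_apply, Pi.sub_apply, Pi.smul_apply, smul_eq_mul]
    ring
  rw [sqDistToLine, sqDistToLine, hcross, hdot, mul_pow, mul_div_mul_left _ _ (pow_ne_zero 2 hst)]

/-- `hfoot` says that the foot of the perpendicular from `x` lies on `a`'s side of `m`, so that `m`
is between that foot and `b`. -/
lemma sqDistToLine_lt_of_sbtw (hx : x ∉ line[ℝ, a, b]) (hm : Sbtw ℝ a m b)
    (hfoot : (x - m) ⬝ᵥ (b - a) ≤ 0) :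
    m ∉ line[ℝ, x, b] ∧ sqDistToLine m x b < sqDistToLine x a b := by
  have hab := hm.left_ne_right
  have hxb : x ≠ b := fun h => hx (h ▸ right_mem_affineSpan_pair ℝ a b)
  have hk : cross (x - a) (b - a) ≠ 0 := (mem_affineSpan_pair_iff_cross_eq_zero hab).not.mp hx
  have hN := dotProduct_self_pos (sub_ne_zero.mpr hab.symm)
  have hM := dotProduct_self_pos (sub_ne_zero.mpr hxb.symm)
  obtain ⟨r, ⟨-, hr1⟩, hr⟩ := hm.wbtw
  have hr1 : r < 1 :=
    hr1.lt_of_ne fun h => hm.ne_right (by rw [← hr, h, AffineMap.lineMap_apply_one])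
  have hcross : cross (m - x) (b - x) = (r - 1) * cross (x - a) (b - a) := by
    simp only [← hr, cross, AffineMap.lineMap_apply_module', Pi.add_apply, Pi.sub_apply,
      Pi.smul_apply, smul_eq_mul]
    ring
  have hcross' : cross (b - x) (b - a) = -cross (x - a) (b - a) := by
    simp only [cross, Pi.sub_apply]
    ring
  have hq : (b - x) ⬝ᵥ (b - a) = (1 - r) * ((b - a) ⬝ᵥ (b - a)) - (x - m) ⬝ᵥ (b - a) := by
    simp only [← hr, dotProduct, Fin.sum_univ_two, AffineMap.lineMap_apply_module', Pi.add_apply,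
      Pi.sub_apply, Pi.smul_apply, smul_eq_mul]
    ring
  have hlagrange := cross_sq_add_dotProduct_sq (b - x) (b - a)
  rw [hcross'] at hlagrange
  constructor
  · rw [mem_affineSpan_pair_iff_cross_eq_zero hxb, hcross]
    exact mul_ne_zero (by linarith) hk
  · rw [sqDistToLine, sqDistToLine, hcross, div_lt_div_iff₀ hM hN]
    set k := cross (x - a) (b - a)
    set N := (b - a) ⬝ᵥ (b - a)
    set q := (b - x) ⬝ᵥ (b - a)
    have hqN : ((1 - r) * N) ^ 2 ≤ q ^ 2 := pow_le_pow_left₀ (by positivity) (by linarith) 2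
    have hk2 : 0 < k ^ 2 := by positivity
    nlinarith [mul_pos hk2 hk2, mul_le_mul_of_nonneg_left hqN hk2.le]

lemma exists_sqDistToLine_lt_of_sbtw (hx : x ∉ line[ℝ, a, b]) (hm : Sbtw ℝ a m b) :
    ∃ y ∈ ({a, b} : Set (Fin 2 → ℝ)),
      m ∉ line[ℝ, x, y] ∧ sqDistToLine m x y < sqDistToLine x a b := by
  rcases le_total ((x - m) ⬝ᵥ (b - a)) 0 with h | h
  · exact ⟨b, by simp, sqDistToLine_lt_of_sbtw hx hm h⟩
  · have hx' : x ∉ line[ℝ, b, a] := by rwa [Set.pair_comm]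
    have h' : (x - m) ⬝ᵥ (a - b) ≤ 0 := by rw [← neg_sub b a, dotProduct_neg]; linarith
    rw [← sqDistToLine_eq_of_mem (right_mem_affineSpan_pair ℝ a b)
      (left_mem_affineSpan_pair ℝ a b) hm.left_ne_right.symm]
    exact ⟨a, by simp, sqDistToLine_lt_of_sbtw hx' hm.symm h'⟩

lemma exists_sqDistToLine_lt_of_mem (hx : x ∉ line[ℝ, a, b]) (hab : a ≠ b)
    (hc : c ∈ line[ℝ, a, b]) (hca : c ≠ a) (hcb : c ≠ b) :
    ∃ m ∈ ({a, b, c} : Set (Fin 2 → ℝ)), ∃ y ∈ ({a, b, c} : Set (Fin 2 → ℝ)),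
      x ≠ y ∧ m ∉ line[ℝ, x, y] ∧ sqDistToLine m x y < sqDistToLine x a b := by
  set S : Set (Fin 2 → ℝ) := {a, b, c} with hS
  have hline : S ⊆ line[ℝ, a, b] := by
    simp [hS, Set.insert_subset_iff, left_mem_affineSpan_pair, right_mem_affineSpan_pair, hc]
  suffices key : ∀ p ∈ S, ∀ m ∈ S, ∀ q ∈ S, Sbtw ℝ p m q →
      ∃ m ∈ S, ∃ y ∈ S, x ≠ y ∧ m ∉ line[ℝ, x, y] ∧ sqDistToLine m x y < sqDistToLine x a b by
    rcases (collinear_insert_of_mem_affineSpan_pair hc).wbtw_or_wbtw_or_wbtw with h | h | h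
    · exact key c (by simp [hS]) a (by simp [hS]) b (by simp [hS]) ⟨h, hca.symm, hab⟩
    · exact key a (by simp [hS]) b (by simp [hS]) c (by simp [hS]) ⟨h, hab.symm, hcb.symm⟩
    · exact key b (by simp [hS]) c (by simp [hS]) a (by simp [hS]) ⟨h, hcb, hca⟩
  intro p hp m hm q hq hpmq
  have hx' : x ∉ line[ℝ, p, q] := fun h =>
    hx (affineSpan_pair_le_of_mem_of_mem (hline hp) (hline hq) h)
  obtain ⟨y, hy, hmy, hlt⟩ := exists_sqDistToLine_lt_of_sbtw hx' hpmq
  have hy' : y ∈ S := by rcases hy with rfl | rfl <;> assumption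
  refine ⟨m, hm, y, hy', fun h => hx (h ▸ hline hy'), hmy, ?_⟩
  rwa [sqDistToLine_eq_of_mem (hline hp) (hline hq) hpmq.left_ne_right] at hlt

theorem ordinaryLines2_nonempty {P : Set (Fin 2 → ℝ)} (hP : P.Finite) (hcol : ¬ Collinear ℝ P) :
    (ordinaryLines2 P).Nonempty := by
  set T := {t : (Fin 2 → ℝ) × (Fin 2 → ℝ) × (Fin 2 → ℝ) |
    t.1 ∈ P ∧ t.2.1 ∈ P ∧ t.2.2 ∈ P ∧ t.2.1 ≠ t.2.2 ∧ t.1 ∉ line[ℝ, t.2.1, t.2.2]}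
  have hT : T.Finite := (hP.prod (hP.prod hP)).subset fun t ht => ⟨ht.1, ht.2.1, ht.2.2.1⟩
  have hTne : T.Nonempty := by
    obtain ⟨x, hx, a, ha, b, hb, hab, hxab⟩ := exists_notMem_affineSpan_pair_of_not_collinear hcol
    exact ⟨(x, a, b), hx, ha, hb, hab, hxab⟩
  obtain ⟨⟨x, a, b⟩, ⟨hx, ha, hb, hab, hxab⟩, hmin⟩ :=
    T.exists_min_image (fun t => sqDistToLine t.1 t.2.1 t.2.2) hT hTne
  refine ⟨line[ℝ, a, b], isLine2_affineSpan_pair hab, ?_⟩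
  suffices P ∩ line[ℝ, a, b] = {a, b} by rw [this, Set.ncard_pair hab]
  apply subset_antisymm
  · rintro c ⟨hc, hcab⟩
    by_contra hc'
    simp only [Set.mem_insert_iff, Set.mem_singleton_iff, not_or] at hc'
    obtain ⟨m, hm, y, hy, hxy, hmxy, hlt⟩ :=
      exists_sqDistToLine_lt_of_mem hxab hab hcab hc'.1 hc'.2
    have hsub : ({a, b, c} : Set (Fin 2 → ℝ)) ⊆ P := by simp [Set.insert_subset_iff, ha, hb, hc]
    exact (hmin (m, x, y) ⟨hsub hm, hx, hsub hy, hxy, hmxy⟩).not_gt hlt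
  · simp [Set.insert_subset_iff, ha, hb, left_mem_affineSpan_pair, right_mem_affineSpan_pair]

end SylvesterGallai

theorem statement14_general (P : Finset (Fin 2 → ℝ)) (p : Fin 2 → ℝ)
    (h : ¬ Collinear ℝ (↑P : Set (Fin 2 → ℝ)))
    (h3 : ∀ L : AffineSubspace ℝ (Fin 2 → ℝ), IsLine2 L → p ∈ L →
      (∃ q ∈ P, q ≠ p ∧ q ∈ L) → 3 ≤ ((↑P : Set (Fin 2 → ℝ)) ∩ ↑L).ncard) :
    ∃ L : AffineSubspace ℝ (Fin 2 → ℝ), L ∈ ordinaryLines2 ↑P ∧ p ∉ L := by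
  obtain ⟨L, hL, hcard⟩ := SylvesterGallai.ordinaryLines2_nonempty P.finite_toSet h
  refine ⟨L, ⟨hL, hcard⟩, fun hpL => ?_⟩
  obtain ⟨q, ⟨hqP, hqL⟩, hqp⟩ :=
    Set.exists_ne_of_one_lt_ncard (s := (P : Set (Fin 2 → ℝ)) ∩ L) (by omega) p
  have := h3 L hL hpL ⟨q, hqP, hqp, hqL⟩
  omega

theorem statement14 (P : Finset (Fin 2 → ℝ)) (p : Fin 2 → ℝ) (hp : p ∈ P)
    (h : ¬ Collinear ℝ (↑P : Set (Fin 2 → ℝ)))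
    (h3 : ∀ L : AffineSubspace ℝ (Fin 2 → ℝ), IsLine2 L → p ∈ L →
      (∃ q ∈ P, q ≠ p ∧ q ∈ L) → 3 ≤ ((↑P : Set (Fin 2 → ℝ)) ∩ ↑L).ncard) :
    ∃ L : AffineSubspace ℝ (Fin 2 → ℝ), L ∈ ordinaryLines2 ↑P ∧ p ∉ L :=
  statement14_general P p h h3
end
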